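/- arXiv:1901.01417 — 2 statements merged into one kernel-verified Lean document; each statement's English description precedes it below -/
import Mathlib

section
/- Suppose gcd(λ_t, n-1) = 1 for every t ∈ {1, …, d}. Then the map x ↦ n-1-x on {1, …, n-2} is an order-reversing poset isomorphism of P(λ)∖{0} onto itself; that is, for all 1 ≤ i, j ≤ n-2 with i ≠ j, i ≺ j in P(λ) if and only if n-1-j ≺ n-1-i in P(λ). In particular P(λ) is self-dual. -/
/-- The lattice point `p(b)` of the fundamental parallelepiped `Π_λ`:
`p(b) = ((Σ_t ⌈bλ_t/(n-1)⌉) - b, ⌈bλ_1/(n-1)⌉, …, ⌈bλ_d/(n-1)⌉) ∈ ℤ^{d+1}`. -/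
def pfun (d n : ℕ) (lam : Fin d → ℕ) (b : ℤ) : Fin (d + 1) → ℤ :=
  Fin.cons ((∑ t, ⌈(b * lam t : ℚ) / ((n : ℚ) - 1)⌉) - b)
    (fun t => ⌈(b * lam t : ℚ) / ((n : ℚ) - 1)⌉)

/-- The relation `i ≺ j` of the fundamental parallelepiped poset `P(λ)` on `{0, …, n-2}`:
`i ≺ j` iff there exists `0 < ℓ < n-1` with `p(i) + p(ℓ) = p(j)`. -/
def precRel (d n : ℕ) (lam : Fin d → ℕ) (i j : ℤ) : Prop :=
  ∃ l : ℤ, 0 < l ∧ l < (n : ℤ) - 1 ∧ pfun d n lam i + pfun d n lam l = pfun d n lam j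

/-!
Write `m = n - 1` and `c_t(b) = ⌈bλ_t/m⌉`. The last `d` coordinates of `p(i) + p(ℓ) = p(j)`
force the first one to read `i + ℓ = j`, so `i ≺ j` says exactly that `0 < j - i < m` and
`c_t(i) + c_t(j - i) = c_t(j)` for all `t`. Since `λ_t` is coprime to `m`, `bλ_t/m` is not an
integer for `0 < b < m`, whence `c_t(m - b) = λ_t + 1 - c_t(b)`. Substituting this into the
conditions for `m - j ≺ m - i`, whose difference is again `j - i`, gives back the conditions
for `i ≺ j`.
-/

open Finset

theorem Int.ceil_intCast_sub_of_notMem_range {R : Type*} [Field R] [LinearOrder R]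
    [IsStrictOrderedRing R] [FloorRing R] (k : ℤ) {x : R} (hx : x ∉ Set.range Int.cast) :
    ⌈(k : R) - x⌉ = k + 1 - ⌈x⌉ := by
  rw [sub_eq_add_neg, Int.ceil_intCast_add, Int.ceil_neg,
    (Int.ceil_eq_floor_add_one_iff_notMem x).2 hx]
  ring

theorem Fin.cons_sum_sub_add_cons_sum_sub_eq_iff {M : Type*} [AddCommGroup M] {d : ℕ}
    (u v w : Fin d → M) (a b c : M) :
    (Fin.cons (∑ t, u t - a) u + Fin.cons (∑ t, v t - b) v : Fin (d + 1) → M) =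
        Fin.cons (∑ t, w t - c) w ↔
      u + v = w ∧ a + b = c := by
  rw [show (Fin.cons (∑ t, u t - a) u + Fin.cons (∑ t, v t - b) v : Fin (d + 1) → M) =
      Fin.cons (∑ t, u t - a + (∑ t, v t - b)) (u + v) from Matrix.cons_add_cons _ _ _ _,
    Fin.cons_inj]
  constructor
  · rintro ⟨hhead, rfl⟩
    refine ⟨rfl, ?_⟩
    simp only [Pi.add_apply, sum_add_distrib] at hhead
    calc a + b = (∑ t, u t + ∑ t, v t) - (∑ t, u t - a + (∑ t, v t - b)) := by abel
      _ = c := by rw [hhead]; abel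
  · rintro ⟨rfl, rfl⟩
    refine ⟨?_, rfl⟩
    simp only [Pi.add_apply, sum_add_distrib]
    abel

theorem mul_div_notMem_range_intCast_of_coprime {k m : ℕ} (hkm : k.Coprime m) {b : ℤ}
    (hb0 : 0 < b) (hbm : b < m) : (b * k : ℚ) / m ∉ Set.range Int.cast := by
  rintro ⟨z, hz⟩
  have hm : (m : ℚ) ≠ 0 := Nat.cast_ne_zero.2 (by omega)
  have hbk : (b * k : ℚ) = m * z := by rw [hz]; field_simp
  have hdvd : (m : ℤ) ∣ b * k := ⟨z, by exact_mod_cast hbk⟩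
  have := Int.le_of_dvd hb0 ((Nat.isCoprime_iff_coprime.2 hkm.symm).dvd_of_dvd_mul_right hdvd)
  omega

variable {d : ℕ}

def ceilCoord (n : ℕ) (lam : Fin d → ℕ) (b : ℤ) (t : Fin d) : ℤ :=
  ⌈(b * lam t : ℚ) / ((n : ℚ) - 1)⌉

theorem pfun_eq_cons (n : ℕ) (lam : Fin d → ℕ) (b : ℤ) :
    pfun d n lam b = Fin.cons (∑ t, ceilCoord n lam b t - b) (ceilCoord n lam b) :=
  rfl

theorem precRel_iff (n : ℕ) (lam : Fin d → ℕ) (i j : ℤ) :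
    precRel d n lam i j ↔ 0 < j - i ∧ j - i < (n : ℤ) - 1 ∧
      ∀ t, ceilCoord n lam i t + ceilCoord n lam (j - i) t = ceilCoord n lam j t := by
  simp only [precRel, pfun_eq_cons, Fin.cons_sum_sub_add_cons_sum_sub_eq_iff]
  simp only [funext_iff, Pi.add_apply]
  constructor
  · rintro ⟨l, hl0, hlm, hcoord, hl⟩
    obtain rfl : l = j - i := by omega
    exact ⟨hl0, hlm, hcoord⟩
  · rintro ⟨h0, hm, hcoord⟩
    exact ⟨j - i, h0, hm, hcoord, by ring⟩

theorem ceilCoord_reflect {n : ℕ} {lam : Fin d → ℕ} {t : Fin d} (hcop : (lam t).Coprime (n - 1))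
    {b : ℤ} (hb0 : 0 < b) (hbn : b < (n : ℤ) - 1) :
    ceilCoord n lam ((n : ℤ) - 1 - b) t = lam t + 1 - ceilCoord n lam b t := by
  have hn : ((n - 1 : ℕ) : ℚ) = (n : ℚ) - 1 := by
    rw [Nat.cast_sub (by omega), Nat.cast_one]
  have hn0 : (n : ℚ) - 1 ≠ 0 := by
    rw [← hn]; exact_mod_cast (show n - 1 ≠ 0 by omega)
  have hsplit : (((n : ℤ) - 1 - b : ℤ) * lam t : ℚ) / ((n : ℚ) - 1) =
      ((lam t : ℤ) : ℚ) - (b * lam t : ℚ) / ((n : ℚ) - 1) := by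
    field_simp; push_cast; ring
  unfold ceilCoord
  rw [hsplit, Int.ceil_intCast_sub_of_notMem_range]
  rw [← hn]
  exact mul_div_notMem_range_intCast_of_coprime hcop hb0 (by omega)

theorem precRel_reflect_iff {n : ℕ} {lam : Fin d → ℕ} (hcop : ∀ t, (lam t).Coprime (n - 1))
    {i j : ℤ} (hi0 : 0 < i) (hin : i < (n : ℤ) - 1) (hj0 : 0 < j) (hjn : j < (n : ℤ) - 1) :
    precRel d n lam i j ↔ precRel d n lam ((n : ℤ) - 1 - j) ((n : ℤ) - 1 - i) := by
  rw [precRel_iff, precRel_iff, show (n : ℤ) - 1 - i - ((n : ℤ) - 1 - j) = j - i by ring]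
  refine and_congr_right fun _ => and_congr_right fun _ => forall_congr' fun t => ?_
  rw [ceilCoord_reflect (hcop t) hj0 hjn, ceilCoord_reflect (hcop t) hi0 hin]
  omega

theorem stmt_8_general (d n : ℕ) (lam : Fin d → ℕ)
    (hcop : ∀ t, Nat.Coprime (lam t) (n - 1)) :
    Set.BijOn (fun x : ℤ => (n : ℤ) - 1 - x)
      (Set.Icc 1 ((n : ℤ) - 2)) (Set.Icc 1 ((n : ℤ) - 2)) ∧
    ∀ i j : ℤ, 1 ≤ i → i ≤ (n : ℤ) - 2 → 1 ≤ j → j ≤ (n : ℤ) - 2 → i ≠ j →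
      (precRel d n lam i j ↔
        precRel d n lam ((n : ℤ) - 1 - j) ((n : ℤ) - 1 - i)) := by
  have hmaps : Set.MapsTo (fun x : ℤ => (n : ℤ) - 1 - x)
      (Set.Icc 1 ((n : ℤ) - 2)) (Set.Icc 1 ((n : ℤ) - 2)) :=
    fun x hx => ⟨by linarith [hx.2], by linarith [hx.1]⟩
  refine ⟨Set.InvOn.bijOn ⟨fun x _ => by simp, fun x _ => by simp⟩ hmaps hmaps, ?_⟩
  intro i j hi1 hin hj1 hjn _
  exact precRel_reflect_iff hcop (by omega) (by omega) (by omega) (by omega)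

/-- Suppose `gcd(λ_t, n-1) = 1` for every `t`. Then the map `x ↦ n-1-x` on
`{1, …, n-2}` is an order-reversing poset isomorphism of `P(λ)∖{0}` onto itself: it is a
bijection of `{1, …, n-2}`, and for all `1 ≤ i, j ≤ n-2` with `i ≠ j`, `i ≺ j` in `P(λ)`
iff `n-1-j ≺ n-1-i` in `P(λ)`. In particular `P(λ)` is self-dual. -/
theorem stmt_8 (d n : ℕ) (hd : 1 ≤ d) (hn : 3 ≤ n) (lam : Fin d → ℕ)
    (hpos : ∀ t, 0 < lam t) (hsum : ∑ t, lam t = n)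
    (hcop : ∀ t, Nat.Coprime (lam t) (n - 1)) :
    Set.BijOn (fun x : ℤ => (n : ℤ) - 1 - x)
      (Set.Icc 1 ((n : ℤ) - 2)) (Set.Icc 1 ((n : ℤ) - 2)) ∧
    ∀ i j : ℤ, 1 ≤ i → i ≤ (n : ℤ) - 2 → 1 ≤ j → j ≤ (n : ℤ) - 2 → i ≠ j →
      (precRel d n lam i j ↔
        precRel d n lam ((n : ℤ) - 1 - j) ((n : ℤ) - 1 - i)) :=
  stmt_8_general d n lam hcop
end

section
/- Under the Setup below, suppose additionally that n-1 is coprime to both x and a. Let k, ℓ ∈ ℤ and let 1 ≤ i, j ≤ n-2 with i ∈ F_k and j ∈ F_{k+ℓ}. Then i ≺ j in P(λ) if and only if the following three inequalities hold: (i) r_i < r_j; (ii) (v-1)p_i + q_i > (v-1)p_j + q_j; (iii) (xv-1)(p_j - p_i) - a·x·(q_j - q_i) - a·(r_j - r_i) > ℓ(n-1) (equivalently, f(i) > f(j) + ℓ(n-1)). That is, i ≺ j iff the vector (p_j - p_i, q_j - q_i, r_j - r_i) lies in the open polyhedral region { x ∈ ℝ^3 : C x > (ℓ(n-1), 0, 0)^T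 } for the matrix C with rows (xv-1, -ax, -a), (1-v, -1, 0), (0, 0, 1). -/
open Finset

section Ceil

variable {K : Type*} [Field K] [LinearOrder K] [IsStrictOrderedRing K] [FloorRing K]

theorem Int.ceil_intCast_div_of_not_dvd {N m : ℤ} (hN : 0 < N) (h : ¬ N ∣ m) :
    ⌈(m : K) / N⌉ = m / N + 1 := by
  have hNK : (0 : K) < N := by exact_mod_cast hN
  have hlt : N * (m / N) < m := by
    have := Int.emod_nonneg m hN.ne'
    have := Int.emod_add_mul_ediv m N
    have : m % N ≠ 0 := fun h0 => h (Int.dvd_of_emod_eq_zero h0)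
    omega
  have hle : m ≤ N * (m / N + 1) := by
    have := Int.emod_lt_of_pos m hN
    have := Int.emod_add_mul_ediv m N
    linarith
  rw [Int.ceil_eq_iff, lt_div_iff₀ hNK, div_le_iff₀ hNK]
  constructor
  · exact_mod_cast (by linarith : (m / N + 1 - 1) * N < m)
  · exact_mod_cast (by linarith : m ≤ (m / N + 1) * N)

theorem Int.ediv_add_one_add_ediv_add_one_eq_iff {N : ℤ} (hN : 0 < N) (p q : ℤ) :
    (p / N + 1) + (q / N + 1) = (p + q) / N + 1 ↔ (p + q) % N < p % N := by
  have := Int.emod_nonneg p hN.ne'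
  have := Int.emod_lt_of_pos p hN
  have := Int.emod_nonneg q hN.ne'
  have := Int.emod_lt_of_pos q hN
  rw [Int.add_ediv_of_pos hN, Int.add_emod]
  split_ifs
  · rw [← Int.sub_add_cancel (p % N + q % N) N, Int.add_emod_right,
      Int.emod_eq_of_lt (by omega) (by omega)]
    omega
  · rw [Int.emod_eq_of_lt (by omega) (by omega)]
    omega

theorem ceil_div_add_ceil_div_eq_iff {N m b₁ b₂ : ℤ} (hm : IsCoprime N m) (h₁ : 0 < b₁)
    (h₁₂ : b₁ < b₂) (h₂ : b₂ < N) :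
    ⌈(b₁ * m : K) / N⌉ + ⌈((b₂ - b₁) * m : K) / N⌉ = ⌈(b₂ * m : K) / N⌉ ↔
      b₂ * m % N < b₁ * m % N := by
  have hN : 0 < N := h₁.trans (h₁₂.trans h₂)
  have not_dvd : ∀ b, 0 < b → b < N → ¬ N ∣ b * m := fun b hb hbN hdvd =>
    (Int.le_of_dvd hb (hm.dvd_of_dvd_mul_right hdvd)).not_gt hbN
  have h := Int.ediv_add_one_add_ediv_add_one_eq_iff hN (b₁ * m) ((b₂ - b₁) * m)
  rw [← add_mul, add_sub_cancel] at h
  rw [← h, ← Int.ceil_intCast_div_of_not_dvd (K := K) hN (not_dvd b₁ h₁ (h₁₂.trans h₂)),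
    ← Int.ceil_intCast_div_of_not_dvd (K := K) hN (not_dvd (b₂ - b₁) (by omega) (by omega)),
    ← Int.ceil_intCast_div_of_not_dvd (K := K) hN (not_dvd b₂ (h₁.trans h₁₂) h₂)]
  push_cast
  rfl

end Ceil

theorem pfun_add_pfun_eq_iff {d n : ℕ} {lam : Fin d → ℕ} {i l j : ℤ} :
    pfun d n lam i + pfun d n lam l = pfun d n lam j ↔
      i + l = j ∧ ∀ t, ⌈(i * lam t : ℚ) / ((n : ℚ) - 1)⌉ + ⌈(l * lam t : ℚ) / ((n : ℚ) - 1)⌉ =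
        ⌈(j * lam t : ℚ) / ((n : ℚ) - 1)⌉ := by
  rw [funext_iff, Fin.forall_fin_succ]
  simp only [pfun, Pi.add_apply, Fin.cons_zero, Fin.cons_succ]
  have sum_eq : (∀ t, ⌈(i * lam t : ℚ) / ((n : ℚ) - 1)⌉ + ⌈(l * lam t : ℚ) / ((n : ℚ) - 1)⌉ =
      ⌈(j * lam t : ℚ) / ((n : ℚ) - 1)⌉) →
      ∑ t, ⌈(i * lam t : ℚ) / ((n : ℚ) - 1)⌉ + ∑ t, ⌈(l * lam t : ℚ) / ((n : ℚ) - 1)⌉ =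
        ∑ t, ⌈(j * lam t : ℚ) / ((n : ℚ) - 1)⌉ := fun h => by
    rw [← sum_add_distrib]
    exact sum_congr rfl fun t _ => h t
  constructor
  · rintro ⟨h₀, h⟩
    exact ⟨by linarith [sum_eq h], h⟩
  · rintro ⟨hij, h⟩
    exact ⟨by linarith [sum_eq h], h⟩

theorem precRel_iff_emod {d n : ℕ} {lam : Fin d → ℕ}
    (hcop : ∀ t, IsCoprime ((n : ℤ) - 1) (lam t)) {i j : ℤ} (hi : 0 < i) (hj : j < (n : ℤ) - 1) :
    precRel d n lam i j ↔ i < j ∧ ∀ t, j * lam t % ((n : ℤ) - 1) < i * lam t % ((n : ℤ) - 1) := by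
  have key (t : Fin d) (hij : i < j) := ceil_div_add_ceil_div_eq_iff (K := ℚ) (hcop t) hi hij hj
  push_cast at key
  simp only [precRel, pfun_add_pfun_eq_iff]
  constructor
  · rintro ⟨l, hl, -, rfl, h⟩
    have hij : i < i + l := by omega
    refine ⟨hij, fun t => (key t hij).1 ?_⟩
    simpa using h t
  · rintro ⟨hij, h⟩
    refine ⟨j - i, by omega, by omega, by ring, fun t => ?_⟩
    push_cast
    exact (key t hij).2 (h t)

theorem Fin.forall_ite_lt_iff {d₁ d₂ : ℕ} (h₁ : 0 < d₁) (h₂ : 0 < d₂) {α : Type*}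
    {P : α → Prop} {x y : α} :
    (∀ t : Fin (d₁ + d₂), P (if (t : ℕ) < d₁ then x else y)) ↔ P x ∧ P y := by
  constructor
  · intro h
    exact ⟨by simpa [h₁] using h ⟨0, by omega⟩, by simpa using h ⟨d₁, by omega⟩⟩
  · rintro ⟨hx, hy⟩ t
    split_ifs
    exacts [hx, hy]

theorem mul_add_lt_mul_add_iff_lex {M r r' s s' : ℤ} (hs : 0 ≤ s) (hsM : s < M) (hs' : 0 ≤ s')
    (hs'M : s' < M) : M * r + s < M * r' + s' ↔ r < r' ∨ r = r' ∧ s < s' := by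
  constructor
  · intro h
    rcases lt_trichotomy r r' with hr | rfl | hr
    · exact Or.inl hr
    · exact Or.inr ⟨rfl, by linarith⟩
    · nlinarith
  · rintro (hr | ⟨rfl, h⟩)
    · nlinarith
    · linarith

theorem lt_and_swap_lt_iff {M X r r' s s' : ℤ} (hr : 0 ≤ r) (hrX : r < X) (hr' : 0 ≤ r')
    (hr'X : r' < X) (hs : 0 ≤ s) (hsM : s < M) (hs' : 0 ≤ s') (hs'M : s' < M) :
    M * r + s < M * r' + s' ∧ r' + X * s' < r + X * s ↔ r < r' ∧ s' < s := by
  rw [mul_add_lt_mul_add_iff_lex hs hsM hs' hs'M, add_comm r', add_comm r,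
    mul_add_lt_mul_add_iff_lex hr' hr'X hr hrX]
  omega

theorem digits_mul_emod_eq_swap {N M x r s : ℤ} (hxM : x * M = N + 1) (hcop : IsCoprime N x)
    (hr : 0 ≤ r) (hrx : r < x) (hs : 0 ≤ s) (hsM : s < M) (hb : 0 < M * r + s)
    (hbN : M * r + s < N) : (M * r + s) * x % N = r + x * s := by
  have hx : 0 < x := hr.trans_lt hrx
  have expand : (M * r + s) * x = (r + x * s) + N * r := by linear_combination r * hxM
  have hle : r + x * s ≤ N := by nlinarith
  have hne : r + x * s ≠ N := fun h => by
    have hdvd : N ∣ (M * r + s) * x := ⟨r + 1, by rw [expand, h]; ring⟩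
    exact (Int.le_of_dvd hb (hcop.dvd_of_dvd_mul_right hdvd)).not_gt hbN
  rw [expand, Int.add_mul_emod_self_left, Int.emod_eq_of_lt (by positivity)
    (lt_of_le_of_ne hle hne)]

theorem digits_mul_mul_modEq {N a x v r p q : ℤ} (hxM : x * ((a + 1) * (v - 1) + 1) = N + 1) :
    (((a + 1) * (v - 1) + 1) * r + (v - 1) * p + q) * (a * x) ≡
      a * r - (x * v - 1) * p + x * a * q [ZMOD N] := by
  rw [Int.modEq_iff_dvd]
  exact ⟨-(a * r + p), by linear_combination -(a * r + p) * hxM⟩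

theorem carry_conditions_iff {N a x v k l i j ri pi qi rj pj qj : ℤ}
    (hxM : x * ((a + 1) * (v - 1) + 1) = N + 1) (hcop : IsCoprime N x)
    (hi : 0 < i) (hiN : i < N) (hj : 0 < j) (hjN : j < N)
    (hdi : i = ((a + 1) * (v - 1) + 1) * ri + (v - 1) * pi + qi) (hri : 0 ≤ ri ∧ ri < x)
    (hpqi : 0 ≤ (v - 1) * pi + qi ∧ (v - 1) * pi + qi < (a + 1) * (v - 1) + 1)
    (hdj : j = ((a + 1) * (v - 1) + 1) * rj + (v - 1) * pj + qj) (hrj : 0 ≤ rj ∧ rj < x)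
    (hpqj : 0 ≤ (v - 1) * pj + qj ∧ (v - 1) * pj + qj < (a + 1) * (v - 1) + 1)
    (hik : k = -((a * ri - (x * v - 1) * pi + x * a * qi) / N))
    (hjk : k + l = -((a * rj - (x * v - 1) * pj + x * a * qj) / N)) :
    (i < j ∧ j * x % N < i * x % N ∧ j * (a * x) % N < i * (a * x) % N) ↔
      (ri < rj ∧ (v - 1) * pj + qj < (v - 1) * pi + qi ∧
        (x * v - 1) * (pj - pi) - a * x * (qj - qi) - a * (rj - ri) > l * N) := by
  have emod_ax_i : i * (a * x) % N = a * ri - (x * v - 1) * pi + x * a * qi + N * k := by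
    rw [hdi, digits_mul_mul_modEq hxM, Int.emod_def, hik]
    ring
  have emod_ax_j : j * (a * x) % N = a * rj - (x * v - 1) * pj + x * a * qj + N * (k + l) := by
    rw [hdj, digits_mul_mul_modEq hxM, Int.emod_def, hjk]
    ring
  rw [add_assoc] at hdi hdj
  rw [emod_ax_i, emod_ax_j, ← and_assoc, hdi, hdj,
    digits_mul_emod_eq_swap hxM hcop hri.1 hri.2 hpqi.1 hpqi.2 (hdi ▸ hi) (hdi ▸ hiN),
    digits_mul_emod_eq_swap hxM hcop hrj.1 hrj.2 hpqj.1 hpqj.2 (hdj ▸ hj) (hdj ▸ hjN),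
    lt_and_swap_lt_iff hri.1 hri.2 hrj.1 hrj.2 hpqi.1 hpqi.2 hpqj.1 hpqj.2, and_assoc]
  refine and_congr_right' (and_congr_right' ⟨fun h => ?_, fun h => ?_⟩) <;> linarith

theorem stmt_14_general (a x u v : ℕ) (hv1 : u + 2 ≤ v)
    (n : ℕ) (hn : n = x * ((a + 1) * (v - 1) + 1))
    (hcopx : Nat.Coprime x (n - 1)) (hcopa : Nat.Coprime a (n - 1))
    (k l : ℤ)
    (i : ℤ) (hi1 : 1 ≤ i) (hi2 : i ≤ (n : ℤ) - 2)
    (j : ℤ) (hj1 : 1 ≤ j) (hj2 : j ≤ (n : ℤ) - 2)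
    (ri pi qi : ℤ)
    (hdi : i = ((n : ℤ) / x) * ri + ((v : ℤ) - 1) * pi + qi)
    (hri : 0 ≤ ri ∧ ri < (x : ℤ))
    (hpqi : 0 ≤ ((v : ℤ) - 1) * pi + qi ∧
      ((v : ℤ) - 1) * pi + qi < ((a : ℤ) + 1) * ((v : ℤ) - 1) + 1)
    (rj pj qj : ℤ)
    (hdj : j = ((n : ℤ) / x) * rj + ((v : ℤ) - 1) * pj + qj)
    (hrj : 0 ≤ rj ∧ rj < (x : ℤ))
    (hpqj : 0 ≤ ((v : ℤ) - 1) * pj + qj ∧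
      ((v : ℤ) - 1) * pj + qj < ((a : ℤ) + 1) * ((v : ℤ) - 1) + 1)
    (hik : k = -(((a : ℤ) * ri - ((x : ℤ) * v - 1) * pi + (x : ℤ) * a * qi)
      / ((n : ℤ) - 1)))
    (hjk : k + l = -(((a : ℤ) * rj - ((x : ℤ) * v - 1) * pj + (x : ℤ) * a * qj)
      / ((n : ℤ) - 1))) :
    precRel (u * a + v + (v - (u + 1))) n
        (fun t => if (t : ℕ) < u * a + v then x else a * x) i j ↔
      (ri < rj ∧
        ((v : ℤ) - 1) * pj + qj < ((v : ℤ) - 1) * pi + qi ∧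
        ((x : ℤ) * v - 1) * (pj - pi) - (a : ℤ) * x * (qj - qi) - (a : ℤ) * (rj - ri) >
          l * ((n : ℤ) - 1)) := by
  have hxM : (x : ℤ) * ((a + 1) * (v - 1) + 1) = ((n : ℤ) - 1) + 1 := by
    subst hn
    push_cast [Nat.cast_sub (by omega : 1 ≤ v)]
    ring
  have hnx : (n : ℤ) / x = (a + 1) * (v - 1) + 1 := by
    rw [sub_add_cancel] at hxM
    rw [← hxM, Int.mul_ediv_cancel_left _ (by omega)]
  rw [hnx] at hdi hdj
  have hcop_n (m : ℕ) (hm : Nat.Coprime m (n - 1)) : IsCoprime ((n : ℤ) - 1) m := by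
    simpa [Nat.cast_sub (by omega : 1 ≤ n)] using (Nat.isCoprime_iff_coprime.2 hm.symm)
  have hcop_lam (t : Fin (u * a + v + (v - (u + 1)))) :
      IsCoprime ((n : ℤ) - 1) ((if (t : ℕ) < u * a + v then x else a * x : ℕ) : ℤ) := by
    split_ifs
    exacts [hcop_n x hcopx, hcop_n (a * x) (Nat.Coprime.mul_left hcopa hcopx)]
  rw [precRel_iff_emod hcop_lam (by omega) (by omega),
    Fin.forall_ite_lt_iff (P := fun m : ℕ => j * m % ((n : ℤ) - 1) < i * m % ((n : ℤ) - 1))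
      (by omega) (by omega)]
  push_cast
  exact carry_conditions_iff hxM (hcop_n x hcopx) (by omega) (by omega) (by omega) (by omega)
    hdi hri hpqi hdj hrj hpqj hik hjk

/-- Setup as in Statement 12, additionally assuming `n-1` coprime to both
`x` and `a`: let `i ∈ F_k` and `j ∈ F_{k+ℓ}` with `1 ≤ i, j ≤ n-2`. Then `i ≺ j` in
`P(λ)` if and only if (i) `r_i < r_j`, (ii) `(v-1)p_i + q_i > (v-1)p_j + q_j`, and
(iii) `(xv-1)(p_j-p_i) - ax(q_j-q_i) - a(r_j-r_i) > ℓ(n-1)` (equivalently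
`f(i) > f(j) + ℓ(n-1)`); i.e. iff `(p_j-p_i, q_j-q_i, r_j-r_i)` lies in the open cone
`Cx > (ℓ(n-1),0,0)ᵀ` for `C` with rows `(xv-1,-ax,-a)`, `(1-v,-1,0)`, `(0,0,1)`. -/
theorem stmt_14 (a x u v : ℕ) (ha : 3 ≤ a) (hax : a ≤ x)
    (hu : u ≤ a - 3) (hv1 : u + 2 ≤ v) (hv2 : v ≤ a - 1) (hv3 : v * x ≤ a * (x - 1))
    (n : ℕ) (hn : n = x * ((a + 1) * (v - 1) + 1))
    (hcopx : Nat.Coprime x (n - 1)) (hcopa : Nat.Coprime a (n - 1))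
    (k l : ℤ)
    (i : ℤ) (hi1 : 1 ≤ i) (hi2 : i ≤ (n : ℤ) - 2)
    (j : ℤ) (hj1 : 1 ≤ j) (hj2 : j ≤ (n : ℤ) - 2)
    (ri pi qi : ℤ)
    (hdi : i = ((n : ℤ) / x) * ri + ((v : ℤ) - 1) * pi + qi)
    (hri : 0 ≤ ri ∧ ri < (x : ℤ))
    (hpqi : 0 ≤ ((v : ℤ) - 1) * pi + qi ∧
      ((v : ℤ) - 1) * pi + qi < ((a : ℤ) + 1) * ((v : ℤ) - 1) + 1)
    (hpi : 0 ≤ pi ∧ pi ≤ (a : ℤ) + 1) (hqi : 0 ≤ qi ∧ qi < (v : ℤ) - 1 ∨ qi = 0)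
    (hpai : pi = (a : ℤ) + 1 → qi = 0)
    (rj pj qj : ℤ)
    (hdj : j = ((n : ℤ) / x) * rj + ((v : ℤ) - 1) * pj + qj)
    (hrj : 0 ≤ rj ∧ rj < (x : ℤ))
    (hpqj : 0 ≤ ((v : ℤ) - 1) * pj + qj ∧
      ((v : ℤ) - 1) * pj + qj < ((a : ℤ) + 1) * ((v : ℤ) - 1) + 1)
    (hpj : 0 ≤ pj ∧ pj ≤ (a : ℤ) + 1) (hqj : 0 ≤ qj ∧ qj < (v : ℤ) - 1 ∨ qj = 0)
    (hpaj : pj = (a : ℤ) + 1 → qj = 0)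
    (hik : k = -(((a : ℤ) * ri - ((x : ℤ) * v - 1) * pi + (x : ℤ) * a * qi)
      / ((n : ℤ) - 1)))
    (hjk : k + l = -(((a : ℤ) * rj - ((x : ℤ) * v - 1) * pj + (x : ℤ) * a * qj)
      / ((n : ℤ) - 1))) :
    precRel (u * a + v + (v - (u + 1))) n
        (fun t => if (t : ℕ) < u * a + v then x else a * x) i j ↔
      (ri < rj ∧
        ((v : ℤ) - 1) * pj + qj < ((v : ℤ) - 1) * pi + qi ∧
        ((x : ℤ) * v - 1) * (pj - pi) - (a : ℤ) * x * (qj - qi) - (a : ℤ) * (rj - ri) >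
          l * ((n : ℤ) - 1)) :=
  stmt_14_general a x u v hv1 n hn hcopx hcopa k l i hi1 hi2 j hj1 hj2 ri pi qi hdi hri hpqi rj pj
    qj hdj hrj hpqj hik hjk
end
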